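/- Let S̃ and S̃_p be n×n real symmetric matrices with ‖S̃‖₂ ≤ 1 and ‖S̃_p‖₂ ≤ 1, set E = S̃_p − S̃, let X be a real n×d matrix each of whose columns has unit Euclidean norm (so ‖X‖_F = √d), let Θ be a real d×c matrix, and let K ≥ 1 be a natural number. Then the SGCN logits satisfy ‖S̃^K X Θ − S̃_p^K X Θ‖_F ≤ √d · K · ‖E‖₂ · ‖Θ‖₂. -/

import Mathlib

/-- The operator norm of a real matrix induced by the Euclidean vector norm. -/
noncomputable def opNorm {m n : Type*} [Fintype m] [Fintype n] [DecidableEq n]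
    (M : Matrix m n ℝ) : ℝ :=
  ‖LinearMap.toContinuousLinearMap (Matrix.toEuclideanLin M)‖

/-- The Frobenius norm of a real matrix. -/
noncomputable def frobNorm {m n : Type*} [Fintype m] [Fintype n]
    (M : Matrix m n ℝ) : ℝ :=
  Real.sqrt (∑ i, ∑ j, (M i j) ^ 2)

/-- The Euclidean norm of a real vector. -/
noncomputable def vecNorm {n : Type*} [Fintype n] (x : n → ℝ) : ℝ :=
  Real.sqrt (∑ i, x i ^ 2)

open Matrix

section aux
open scoped Matrix.Norms.L2Operator

variable {m n l : ℕ}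

lemma opNorm_eq_norm (M : Matrix (Fin m) (Fin n) ℝ) : opNorm M = ‖M‖ := by
  rw [Matrix.l2_opNorm_def, LinearEquiv.trans_apply]
  rfl

lemma opNorm_nonneg (M : Matrix (Fin m) (Fin n) ℝ) : 0 ≤ opNorm M := by
  rw [opNorm_eq_norm]; exact norm_nonneg _

lemma opNorm_mul_le (A : Matrix (Fin m) (Fin n) ℝ) (B : Matrix (Fin n) (Fin l) ℝ) :
    opNorm (A * B) ≤ opNorm A * opNorm B := by
  simp only [opNorm_eq_norm]; exact Matrix.l2_opNorm_mul A B

lemma opNorm_transpose (M : Matrix (Fin m) (Fin n) ℝ) : opNorm Mᵀ = opNorm M := by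
  have h : Mᵀ = Mᴴ := by ext i j; simp [Matrix.conjTranspose_apply]
  rw [h]
  simp only [opNorm_eq_norm]
  exact Matrix.l2_opNorm_conjTranspose M

lemma opNorm_one_le : opNorm (1 : Matrix (Fin n) (Fin n) ℝ) ≤ 1 := by
  unfold opNorm
  have h : LinearMap.toContinuousLinearMap
      (Matrix.toEuclideanLin (1 : Matrix (Fin n) (Fin n) ℝ)) =
      ContinuousLinearMap.id ℝ (EuclideanSpace ℝ (Fin n)) := by
    ext x
    simp [Matrix.toEuclideanLin_apply]
  rw [h]
  exact ContinuousLinearMap.norm_id_le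

lemma opNorm_mulVec_sq (A : Matrix (Fin m) (Fin n) ℝ) (x : Fin n → ℝ) :
    ∑ i, (A.mulVec x i) ^ 2 ≤ opNorm A ^ 2 * ∑ j, x j ^ 2 := by
  set x' : EuclideanSpace ℝ (Fin n) := (EuclideanSpace.equiv (Fin n) ℝ).symm x
  have h := Matrix.l2_opNorm_mulVec A x'
  have hnorm : ∀ {k : ℕ} (v : EuclideanSpace ℝ (Fin k)), ‖v‖ ^ 2 = ∑ i, v i ^ 2 := by
    intro k v
    rw [EuclideanSpace.norm_eq, Real.sq_sqrt (by positivity)]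
    simp [sq_abs]
  have h2 : ‖(EuclideanSpace.equiv (Fin m) ℝ).symm (A.mulVec x')‖ ^ 2 ≤ (‖A‖ * ‖x'‖) ^ 2 := by
    apply pow_le_pow_left₀ (norm_nonneg _) h
  calc ∑ i, (A.mulVec x i) ^ 2
      = ‖(EuclideanSpace.equiv (Fin m) ℝ).symm (A.mulVec x')‖ ^ 2 := by rw [hnorm]; rfl
    _ ≤ (‖A‖ * ‖x'‖) ^ 2 := h2
    _ = opNorm A ^ 2 * ∑ j, x j ^ 2 := by
        rw [mul_pow, opNorm_eq_norm, hnorm x']; rfl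

lemma opNorm_add_le (A B : Matrix (Fin m) (Fin n) ℝ) :
    opNorm (A + B) ≤ opNorm A + opNorm B := by
  simp only [opNorm_eq_norm]; exact norm_add_le A B

lemma opNorm_sub_rev (A B : Matrix (Fin m) (Fin n) ℝ) :
    opNorm (A - B) = opNorm (B - A) := by
  simp only [opNorm_eq_norm]; exact norm_sub_rev A B

lemma opNorm_pow_le_one {M : Matrix (Fin n) (Fin n) ℝ} (hM : opNorm M ≤ 1) (k : ℕ) :
    opNorm (M ^ k) ≤ 1 := by
  induction k with
  | zero => simpa using opNorm_one_le
  | succ k ih =>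
      calc opNorm (M ^ (k + 1)) = opNorm (M ^ k * M) := by rw [pow_succ]
        _ ≤ opNorm (M ^ k) * opNorm M := opNorm_mul_le _ _
        _ ≤ 1 * 1 := mul_le_mul ih hM (opNorm_nonneg _) zero_le_one
        _ = 1 := one_mul 1

lemma opNorm_pow_sub_le {S Sp : Matrix (Fin n) (Fin n) ℝ}
    (hS : opNorm S ≤ 1) (hSp : opNorm Sp ≤ 1) (K : ℕ) :
    opNorm (S ^ K - Sp ^ K) ≤ (K : ℝ) * opNorm (S - Sp) := by
  induction K with
  | zero => simp [opNorm_eq_norm]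
  | succ k ih =>
      have key : S ^ (k + 1) - Sp ^ (k + 1) =
          S * (S ^ k - Sp ^ k) + (S - Sp) * Sp ^ k := by
        rw [pow_succ', pow_succ']
        noncomm_ring
      calc opNorm (S ^ (k + 1) - Sp ^ (k + 1))
          = opNorm (S * (S ^ k - Sp ^ k) + (S - Sp) * Sp ^ k) := by rw [key]
        _ ≤ opNorm (S * (S ^ k - Sp ^ k)) + opNorm ((S - Sp) * Sp ^ k) := opNorm_add_le _ _
        _ ≤ opNorm S * opNorm (S ^ k - Sp ^ k) + opNorm (S - Sp) * opNorm (Sp ^ k) :=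
            add_le_add (opNorm_mul_le _ _) (opNorm_mul_le _ _)
        _ ≤ 1 * ((k : ℝ) * opNorm (S - Sp)) + opNorm (S - Sp) * 1 := by
            apply add_le_add
            · exact mul_le_mul hS ih (opNorm_nonneg _)
                zero_le_one
            · exact mul_le_mul_of_nonneg_left (opNorm_pow_le_one hSp k) (opNorm_nonneg _)
        _ = ((k : ℝ) + 1) * opNorm (S - Sp) := by ring
        _ = ((k + 1 : ℕ) : ℝ) * opNorm (S - Sp) := by push_cast; ring

lemma frobNorm_nonneg (M : Matrix (Fin m) (Fin n) ℝ) : 0 ≤ frobNorm M :=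
  Real.sqrt_nonneg _

lemma frobNorm_transpose (M : Matrix (Fin m) (Fin n) ℝ) : frobNorm Mᵀ = frobNorm M := by
  unfold frobNorm
  rw [Finset.sum_comm]
  rfl

lemma frob_mul_le_op_frob (A : Matrix (Fin m) (Fin n) ℝ) (B : Matrix (Fin n) (Fin l) ℝ) :
    frobNorm (A * B) ≤ opNorm A * frobNorm B := by
  unfold frobNorm
  rw [Finset.sum_comm]
  have hcol : ∀ j, ∑ i, ((A * B) i j) ^ 2 ≤ opNorm A ^ 2 * ∑ k, (B k j) ^ 2 := by
    intro j
    have : ∀ i, (A * B) i j = A.mulVec (fun k => B k j) i := by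
      intro i; simp [Matrix.mul_apply, Matrix.mulVec, dotProduct]
    simp_rw [this]
    exact opNorm_mulVec_sq A _
  calc Real.sqrt (∑ j, ∑ i, ((A * B) i j) ^ 2)
      ≤ Real.sqrt (∑ j, opNorm A ^ 2 * ∑ k, (B k j) ^ 2) := by
        apply Real.sqrt_le_sqrt
        exact Finset.sum_le_sum fun j _ => hcol j
    _ = opNorm A * Real.sqrt (∑ k, ∑ j, (B k j) ^ 2) := by
        rw [← Finset.mul_sum, Real.sqrt_mul (by positivity),
          Real.sqrt_sq (opNorm_nonneg A), Finset.sum_comm]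

lemma frob_mul_le_frob_op (A : Matrix (Fin m) (Fin n) ℝ) (B : Matrix (Fin n) (Fin l) ℝ) :
    frobNorm (A * B) ≤ frobNorm A * opNorm B := by
  have h : A * B = (Bᵀ * Aᵀ)ᵀ := by simp [Matrix.transpose_mul]
  rw [h, frobNorm_transpose]
  calc frobNorm (Bᵀ * Aᵀ) ≤ opNorm Bᵀ * frobNorm Aᵀ := frob_mul_le_op_frob _ _
    _ = frobNorm A * opNorm B := by rw [opNorm_transpose, frobNorm_transpose]; ring

end aux

/-- Proposition 2: the SGCN logits satisfy
`‖S̃^K X Θ − S̃_p^K X Θ‖_F ≤ √d K ‖E‖₂ ‖Θ‖₂` where `E = S̃_p − S̃`. -/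
theorem stmt10 {n d c : ℕ} (S Sp : Matrix (Fin n) (Fin n) ℝ)
    (hSs : S.IsSymm) (hSps : Sp.IsSymm)
    (hS : opNorm S ≤ 1) (hSp : opNorm Sp ≤ 1)
    (X : Matrix (Fin n) (Fin d) ℝ) (hX : ∀ j, vecNorm (fun i => X i j) = 1)
    (Θ : Matrix (Fin d) (Fin c) ℝ) (K : ℕ) (hK : 1 ≤ K) :
    frobNorm (S ^ K * X * Θ - Sp ^ K * X * Θ) ≤
      Real.sqrt d * (K : ℝ) * opNorm (Sp - S) * opNorm Θ := by
  have hXfrob : frobNorm X = Real.sqrt d := by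
    unfold frobNorm
    rw [Finset.sum_comm]
    have hcol : ∀ j : Fin d, ∑ i, (X i j) ^ 2 = 1 := by
      intro j
      have h := hX j
      unfold vecNorm at h
      rwa [Real.sqrt_eq_one] at h
    simp [hcol]
  have key : S ^ K * X * Θ - Sp ^ K * X * Θ = (S ^ K - Sp ^ K) * X * Θ := by
    rw [Matrix.sub_mul, Matrix.sub_mul]
  rw [key]
  have hop : opNorm (S ^ K - Sp ^ K) ≤ (K : ℝ) * opNorm (Sp - S) := by
    calc opNorm (S ^ K - Sp ^ K) ≤ (K : ℝ) * opNorm (S - Sp) := opNorm_pow_sub_le hS hSp K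
      _ = (K : ℝ) * opNorm (Sp - S) := by rw [opNorm_sub_rev]
  calc frobNorm ((S ^ K - Sp ^ K) * X * Θ)
      ≤ frobNorm ((S ^ K - Sp ^ K) * X) * opNorm Θ := frob_mul_le_frob_op _ _
    _ ≤ opNorm (S ^ K - Sp ^ K) * frobNorm X * opNorm Θ :=
        mul_le_mul_of_nonneg_right (frob_mul_le_op_frob _ _) (opNorm_nonneg _)
    _ ≤ ((K : ℝ) * opNorm (Sp - S)) * Real.sqrt d * opNorm Θ := by
        rw [hXfrob]
        apply mul_le_mul_of_nonneg_right _ (opNorm_nonneg _)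
        exact mul_le_mul_of_nonneg_right hop (Real.sqrt_nonneg _)
    _ = Real.sqrt d * (K : ℝ) * opNorm (Sp - S) * opNorm Θ := by ring
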